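/- arXiv:1606.06301 — 3 statements merged into one kernel-verified Lean document; each statement's English description precedes it below -/
import Mathlib

section
/- Let ω be a unit vector in ℂ^(Fin m × Fin n), O an m×m complex matrix, B an invertible n×n complex matrix, and set P = (B⁻¹)ᴴ B⁻¹. Suppose the clustering bound |⟨ω, (O ⊗ₖ P) ω⟩ − ⟨ω, (O ⊗ₖ 1) ω⟩ · ⟨ω, (1 ⊗ₖ P) ω⟩| ≤ ε · ‖O‖ · ‖P‖ holds for some ε ≥ 0. Then, with ω' = (1 ⊗ₖ B⁻¹) ω / ‖(1 ⊗ₖ B⁻¹) ω‖, one has |⟨ω', (O ⊗ₖ 1) ω'⟩ − ⟨ω, (O ⊗ₖ 1) ω⟩| ≤ ε · ‖O‖ · (‖B‖ · ‖B⁻¹‖)². -/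
/-!
Put `v = (1 ⊗ B⁻¹) ω`. Conjugation by `1 ⊗ B⁻¹` turns `⟪ω, (O ⊗ P) ω⟫` into `⟪v, (O ⊗ 1) v⟫`
and `⟪ω, (1 ⊗ P) ω⟫` into `‖v‖²`, so `⟪ω', (O ⊗ 1) ω'⟫ = ⟪ω, (O ⊗ P) ω⟫ / ‖v‖²` and the error is the
clustering defect divided by `‖v‖²`. Since `ω = (1 ⊗ B) v` and `B ↦ 1 ⊗ B` is a star homomorphism
of C⋆-algebras, hence contractive, `1 ≤ ‖B‖ ‖v‖`; finally `‖P‖ = ‖B⁻¹‖²` by the C⋆-identity.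
-/

open Matrix
open scoped Kronecker ComplexInnerProductSpace

/-- The `ℓ² → ℓ²` operator norm of a complex matrix. -/
noncomputable def l2opNorm {m n : Type*} [Fintype m] [Fintype n] [DecidableEq n]
    (M : Matrix m n ℂ) : ℝ :=
  ‖LinearMap.toContinuousLinearMap (Matrix.toEuclideanLin M)‖

open scoped Matrix.Norms.L2Operator

lemma l2opNorm_eq_l2_opNorm {m n : Type*} [Fintype m] [Fintype n] [DecidableEq n]
    (M : Matrix m n ℂ) : l2opNorm M = ‖M‖ := rfl

lemma inner_inv_norm_smul_apply {E : Type*} [NormedAddCommGroup E] [InnerProductSpace ℂ E]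
    (T : E →ₗ[ℂ] E) (v : E) :
    ⟪‖v‖⁻¹ • v, T (‖v‖⁻¹ • v)⟫ = ⟪v, T v⟫ / (‖v‖ : ℂ) ^ 2 := by
  simp only [← Complex.coe_smul, map_smul, inner_smul_left, inner_smul_right, Complex.conj_ofReal]
  push_cast
  ring

lemma Complex.norm_div_sq_sub_le {a b : ℂ} {c k β N : ℝ} (hc : 0 ≤ c) (hN : 1 ≤ β * N)
    (h : ‖a - b * (N : ℂ) ^ 2‖ ≤ c * k ^ 2) :
    ‖a / (N : ℂ) ^ 2 - b‖ ≤ c * (β * k) ^ 2 := by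
  have hN₀ : (N : ℂ) ^ 2 ≠ 0 := by
    have : N ≠ 0 := by rintro rfl; linarith
    exact pow_ne_zero 2 (by exact_mod_cast this)
  rw [div_sub' hN₀, mul_comm, norm_div, div_le_iff₀ (norm_pos_iff.mpr hN₀), norm_pow,
    Complex.norm_real, Real.norm_eq_abs, sq_abs]
  calc ‖a - b * (N : ℂ) ^ 2‖ ≤ c * k ^ 2 * 1 := by rwa [mul_one]
    _ ≤ c * k ^ 2 * (β * N) ^ 2 := by gcongr; exact one_le_pow₀ hN
    _ = c * (β * k) ^ 2 * N ^ 2 := by ring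

namespace Matrix

lemma inner_toEuclideanLin_conjTranspose_mul_mul {𝕜 p q : Type*} [RCLike 𝕜]
    [Fintype p] [Fintype q] [DecidableEq p] [DecidableEq q]
    (A : Matrix p q 𝕜) (M : Matrix p p 𝕜) (x : EuclideanSpace 𝕜 q) :
    inner 𝕜 x (toEuclideanLin (Aᴴ * M * A) x) =
      inner 𝕜 (toEuclideanLin A x) (toEuclideanLin M (toEuclideanLin A x)) := by
  simp only [EuclideanSpace.inner_eq_star_dotProduct, toLpLin_apply, ← mulVec_mulVec]
  rw [dotProduct_comm, dotProduct_mulVec, ← star_mulVec, dotProduct_comm]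

variable {ι κ : Type*} [Fintype ι] [Fintype κ] [DecidableEq ι] [DecidableEq κ]

lemma conjTranspose_one_kronecker_mul_kronecker_one_mul {R : Type*} [CommRing R] [StarRing R]
    (O : Matrix ι ι R) (C : Matrix κ κ R) :
    ((1 : Matrix ι ι R) ⊗ₖ C)ᴴ * (O ⊗ₖ (1 : Matrix κ κ R)) * (1 ⊗ₖ C) = O ⊗ₖ (Cᴴ * C) := by
  simp only [conjTranspose_kronecker, conjTranspose_one, ← mul_kronecker_mul, one_mul, mul_one]

lemma inner_toEuclideanLin_kronecker_conjTranspose_mul_self {𝕜 : Type*} [RCLike 𝕜]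
    (O : Matrix ι ι 𝕜) (C : Matrix κ κ 𝕜) (x : EuclideanSpace 𝕜 (ι × κ)) :
    inner 𝕜 x (toEuclideanLin (O ⊗ₖ (Cᴴ * C)) x) =
      inner 𝕜 (toEuclideanLin ((1 : Matrix ι ι 𝕜) ⊗ₖ C) x)
        (toEuclideanLin (O ⊗ₖ (1 : Matrix κ κ 𝕜)) (toEuclideanLin (1 ⊗ₖ C) x)) := by
  rw [← conjTranspose_one_kronecker_mul_kronecker_one_mul,
    inner_toEuclideanLin_conjTranspose_mul_mul]

lemma inner_toEuclideanLin_one_kronecker_conjTranspose_mul_self {𝕜 : Type*} [RCLike 𝕜]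
    (C : Matrix κ κ 𝕜) (x : EuclideanSpace 𝕜 (ι × κ)) :
    inner 𝕜 x (toEuclideanLin ((1 : Matrix ι ι 𝕜) ⊗ₖ (Cᴴ * C)) x) =
      (‖toEuclideanLin ((1 : Matrix ι ι 𝕜) ⊗ₖ C) x‖ : 𝕜) ^ 2 := by
  rw [inner_toEuclideanLin_kronecker_conjTranspose_mul_self, one_kronecker_one, toLpLin_one,
    LinearMap.id_apply, inner_self_eq_norm_sq_to_K]

variable (ι) in
def oneKroneckerStarAlgHom : Matrix κ κ ℂ →⋆ₐ[ℂ] Matrix (ι × κ) (ι × κ) ℂ where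
  toFun B := 1 ⊗ₖ B
  map_one' := one_kronecker_one
  map_mul' A B := by rw [← mul_kronecker_mul, one_mul]
  map_zero' := kronecker_zero _
  map_add' := kronecker_add _
  commutes' r := by simp [Algebra.algebraMap_eq_smul_one, kronecker_smul]
  map_star' B := by simp [star_eq_conjTranspose, conjTranspose_kronecker]

lemma l2_opNorm_one_kronecker_le (B : Matrix κ κ ℂ) : ‖(1 : Matrix ι ι ℂ) ⊗ₖ B‖ ≤ ‖B‖ :=
  NonUnitalStarAlgHom.norm_apply_le (oneKroneckerStarAlgHom ι) B

lemma norm_le_l2_opNorm_mul_norm_one_kronecker_inv_apply {B : Matrix κ κ ℂ} (hB : IsUnit B)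
    (x : EuclideanSpace ℂ (ι × κ)) :
    ‖x‖ ≤ ‖B‖ * ‖toEuclideanLin ((1 : Matrix ι ι ℂ) ⊗ₖ B⁻¹) x‖ := by
  set y := toEuclideanLin ((1 : Matrix ι ι ℂ) ⊗ₖ B⁻¹) x
  have hx : toEuclideanLin ((1 : Matrix ι ι ℂ) ⊗ₖ B) y = x := by
    rw [← LinearMap.comp_apply, ← toLpLin_mul_same, ← mul_kronecker_mul, one_mul,
      mul_nonsing_inv B ((isUnit_iff_isUnit_det B).mp hB), one_kronecker_one, toLpLin_one,
      LinearMap.id_apply]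
  calc ‖x‖ ≤ ‖(1 : Matrix ι ι ℂ) ⊗ₖ B‖ * ‖y‖ :=
        hx ▸ (toEuclideanCLM (𝕜 := ℂ) ((1 : Matrix ι ι ℂ) ⊗ₖ B)).le_opNorm y
    _ ≤ ‖B‖ * ‖y‖ := by gcongr; exact l2_opNorm_one_kronecker_le B

end Matrix

theorem per_step_disentangling_bound (m n : ℕ)
    (O : Matrix (Fin m) (Fin m) ℂ)
    (B : Matrix (Fin n) (Fin n) ℂ) (hB : IsUnit B)
    (ω : EuclideanSpace ℂ (Fin m × Fin n)) (hω : ‖ω‖ = 1)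
    (P : Matrix (Fin n) (Fin n) ℂ) (hP : P = (B⁻¹)ᴴ * B⁻¹)
    (ε : ℝ) (hε : 0 ≤ ε)
    (hcluster :
      ‖⟪ω, toEuclideanLin (O ⊗ₖ P) ω⟫ -
          ⟪ω, toEuclideanLin (O ⊗ₖ (1 : Matrix (Fin n) (Fin n) ℂ)) ω⟫ *
          ⟪ω, toEuclideanLin ((1 : Matrix (Fin m) (Fin m) ℂ) ⊗ₖ P) ω⟫‖ ≤
        ε * l2opNorm O * l2opNorm P)
    (ω' : EuclideanSpace ℂ (Fin m × Fin n))
    (hω' : ω' = ‖toEuclideanLin ((1 : Matrix (Fin m) (Fin m) ℂ) ⊗ₖ B⁻¹) ω‖⁻¹ •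
                 toEuclideanLin ((1 : Matrix (Fin m) (Fin m) ℂ) ⊗ₖ B⁻¹) ω) :
    ‖⟪ω', toEuclideanLin (O ⊗ₖ (1 : Matrix (Fin n) (Fin n) ℂ)) ω'⟫ -
        ⟪ω, toEuclideanLin (O ⊗ₖ (1 : Matrix (Fin n) (Fin n) ℂ)) ω⟫‖ ≤
      ε * l2opNorm O * (l2opNorm B * l2opNorm B⁻¹) ^ 2 := by
  subst hP hω'
  have hv := norm_le_l2_opNorm_mul_norm_one_kronecker_inv_apply (ι := Fin m) hB ω
  rw [hω] at hv
  rw [inner_toEuclideanLin_one_kronecker_conjTranspose_mul_self] at hcluster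
  rw [inner_inv_norm_smul_apply, ← inner_toEuclideanLin_kronecker_conjTranspose_mul_self]
  simp only [l2opNorm_eq_l2_opNorm, l2_opNorm_conjTranspose_mul_self, ← sq] at hcluster ⊢
  exact Complex.norm_div_sq_sub_le (by positivity) hv hcluster
end

section
/- Let V = ℂⁿ with the standard complex inner product, let T be an n×n complex matrix, let N be a natural number, and let ω_0, ω_1, …, ω_N be unit vectors in V. Suppose there are invertible n×n complex matrices C_1, …, C_N such that for each i ∈ {1,…,N}: (a) C_i and C_iᴴ both commute with T; (b) ω_{i−1} = C_i⁻¹ ω_i / ‖C_i⁻¹ ω_i‖; and (c) the clustering bound |⟨ω_i, T (C_i⁻¹)ᴴ C_i⁻¹ ω_i⟩ − ⟨ω_i, T ω_i⟩ · ⟨ω_i, (C_i⁻¹)ᴴ C_i⁻¹ ω_i⟩| ≤ δ · ‖T‖ · ‖(C_i⁻¹)ᴴ C_i⁻¹‖ holds for some δ ≥ 0. Let κ_* = max over i of ‖C_i‖·‖C_i⁻¹‖. Then |⟨ω_0, T ω_0⟩ − ⟨ω_N, T ω_N⟩| ≤ N · δ · ‖T‖ · κ_*². -/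
/-!
Write `A = C⁻¹`. Because `Aᴴ` commutes with `T`, `⟪Aψ, T Aψ⟫ = ⟪ψ, T AᴴA ψ⟫` and
`⟪ψ, AᴴA ψ⟫ = ‖Aψ‖²`, so one disentangling step changes the expectation of `T` by exactly the
clustering defect divided by `‖Aψ‖²`. Since `1 = ‖ψ‖ ≤ ‖C‖ ‖Aψ‖` and `‖AᴴA‖ = ‖A‖²`, each step
moves the expectation by at most `δ ‖T‖ (‖C‖ ‖A‖)² ≤ δ ‖T‖ κ²`, and the `N` steps telescope.
-/

open Matrix
open scoped ComplexInnerProductSpace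

theorem Fin.dist_zero_last_le_mul {α : Type*} [PseudoMetricSpace α] {N : ℕ}
    (f : Fin (N + 1) → α) {ε : ℝ} (h : ∀ i : Fin N, dist (f i.castSucc) (f i.succ) ≤ ε) :
    dist (f 0) (f (Fin.last N)) ≤ N * ε := by
  induction N with
  | zero => simp
  | succ N ih =>
    calc dist (f 0) (f (Fin.last (N + 1)))
        ≤ dist (f 0) (f (Fin.last N).castSucc) +
            dist (f (Fin.last N).castSucc) (f (Fin.last N).succ) := dist_triangle _ _ _
      _ ≤ N * ε + ε := add_le_add (ih (fun j => f j.castSucc) fun i => h i.castSucc) (h _)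
      _ = (N + 1 : ℕ) * ε := by push_cast; ring

theorem Matrix.commute_nonsing_inv_left {n α : Type*} [Fintype n] [DecidableEq n] [CommRing α]
    {B T : Matrix n n α} (hB : IsUnit B) (h : Commute B T) : Commute B⁻¹ T := by
  obtain ⟨u, rfl⟩ := hB
  rw [← Matrix.coe_units_inv]
  exact h.units_inv_left

theorem l2opNorm_nonneg {m n : Type*} [Fintype m] [Fintype n] [DecidableEq n]
    (M : Matrix m n ℂ) : 0 ≤ l2opNorm M :=
  norm_nonneg _

theorem norm_toEuclideanLin_apply_le {m n : Type*} [Fintype m] [Fintype n] [DecidableEq n]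
    (M : Matrix m n ℂ) (v : EuclideanSpace ℂ n) :
    ‖toEuclideanLin M v‖ ≤ l2opNorm M * ‖v‖ :=
  (LinearMap.toContinuousLinearMap (toEuclideanLin M)).le_opNorm v

open scoped Matrix.Norms.L2Operator in
theorem l2opNorm_conjTranspose_mul_self {m n : Type*} [Fintype m] [Fintype n] [DecidableEq n]
    (M : Matrix m n ℂ) : l2opNorm (Mᴴ * M) = l2opNorm M ^ 2 :=
  (l2_opNorm_conjTranspose_mul_self M).trans (sq _).symm

theorem toEuclideanLin_mul_apply {l m n : Type*} [Fintype m] [Fintype n] [DecidableEq m]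
    [DecidableEq n] (A : Matrix l m ℂ) (B : Matrix m n ℂ) (v : EuclideanSpace ℂ n) :
    toEuclideanLin (A * B) v = toEuclideanLin A (toEuclideanLin B v) := by
  simp [toLpLin_apply, mulVec_mulVec]

theorem inner_toEuclideanLin_conjTranspose_mul {l m n : Type*} [Fintype l] [Fintype m]
    [Fintype n] [DecidableEq l] [DecidableEq m] [DecidableEq n] (A : Matrix l m ℂ)
    (B : Matrix l n ℂ) (v : EuclideanSpace ℂ m) (w : EuclideanSpace ℂ n) :
    ⟪v, toEuclideanLin (Aᴴ * B) w⟫ = ⟪toEuclideanLin A v, toEuclideanLin B w⟫ := by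
  rw [toEuclideanLin_mul_apply, toEuclideanLin_conjTranspose_eq_adjoint,
    LinearMap.adjoint_inner_right]

theorem norm_le_l2opNorm_mul_norm_nonsing_inv_apply {n : Type*} [Fintype n] [DecidableEq n]
    {C : Matrix n n ℂ} (hC : IsUnit C) (v : EuclideanSpace ℂ n) :
    ‖v‖ ≤ l2opNorm C * ‖toEuclideanLin C⁻¹ v‖ := by
  have hCinv : C * C⁻¹ = 1 := mul_nonsing_inv C ((isUnit_iff_isUnit_det C).mp hC)
  calc ‖v‖ = ‖toEuclideanLin C (toEuclideanLin C⁻¹ v)‖ := by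
        rw [← toEuclideanLin_mul_apply, hCinv]; simp
    _ ≤ l2opNorm C * ‖toEuclideanLin C⁻¹ v‖ := norm_toEuclideanLin_apply_le _ _

namespace Matrix

variable {n : Type*} [Fintype n] [DecidableEq n]

noncomputable def expectation (T : Matrix n n ℂ) (v : EuclideanSpace ℂ n) : ℂ :=
  ⟪v, toEuclideanLin T v⟫

theorem expectation_smul_real (T : Matrix n n ℂ) (r : ℝ) (v : EuclideanSpace ℂ n) :
    expectation T (r • v) = r ^ 2 * expectation T v := by
  rw [expectation, expectation, LinearMap.map_smul_of_tower, inner_smul_left_eq_smul,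
    inner_smul_right_eq_smul, smul_smul, Complex.real_smul, sq, Complex.ofReal_mul]

theorem expectation_conjTranspose_mul_self (A : Matrix n n ℂ) (v : EuclideanSpace ℂ n) :
    expectation (Aᴴ * A) v = (‖toEuclideanLin A v‖ : ℂ) ^ 2 := by
  rw [expectation, inner_toEuclideanLin_conjTranspose_mul, inner_self_eq_norm_sq_to_K]
  rfl

theorem expectation_toEuclideanLin {A T : Matrix n n ℂ} (hA : Commute Aᴴ T)
    (v : EuclideanSpace ℂ n) :
    expectation T (toEuclideanLin A v) = expectation (T * (Aᴴ * A)) v := by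
  rw [expectation, expectation, ← mul_assoc, ← hA.eq, mul_assoc,
    inner_toEuclideanLin_conjTranspose_mul, toEuclideanLin_mul_apply]

theorem expectation_normalize_sub {A T : Matrix n n ℂ} (hA : Commute Aᴴ T)
    {v : EuclideanSpace ℂ n} (hv : toEuclideanLin A v ≠ 0) :
    expectation T (‖toEuclideanLin A v‖⁻¹ • toEuclideanLin A v) - expectation T v =
      ((‖toEuclideanLin A v‖ : ℂ) ^ 2)⁻¹ *
        (expectation (T * (Aᴴ * A)) v - expectation T v * expectation (Aᴴ * A) v) := by
  have hr : (‖toEuclideanLin A v‖ : ℂ) ≠ 0 := by exact_mod_cast norm_ne_zero_iff.mpr hv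
  rw [expectation_smul_real, expectation_toEuclideanLin hA, expectation_conjTranspose_mul_self]
  push_cast
  field_simp

theorem norm_expectation_normalize_nonsing_inv_sub_le {C T : Matrix n n ℂ} (hC : IsUnit C)
    (hCT : Commute Cᴴ T) {v : EuclideanSpace ℂ n} (hv : ‖v‖ = 1) {ε : ℝ} (hε : 0 ≤ ε)
    (hcluster : ‖expectation (T * (C⁻¹ᴴ * C⁻¹)) v - expectation T v * expectation (C⁻¹ᴴ * C⁻¹) v‖
      ≤ ε * l2opNorm (C⁻¹ᴴ * C⁻¹)) :
    ‖expectation T (‖toEuclideanLin C⁻¹ v‖⁻¹ • toEuclideanLin C⁻¹ v) - expectation T v‖ ≤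
      ε * (l2opNorm C * l2opNorm C⁻¹) ^ 2 := by
  set r := ‖toEuclideanLin C⁻¹ v‖
  have hCinvT : Commute C⁻¹ᴴ T := by
    rw [conjTranspose_nonsing_inv]
    exact commute_nonsing_inv_left hC.star hCT
  have hr : 1 ≤ l2opNorm C * r := hv ▸ norm_le_l2opNorm_mul_norm_nonsing_inv_apply hC v
  have hr0 : 0 < r := lt_of_le_of_ne (norm_nonneg _) fun h => by
    rw [← h, mul_zero] at hr; linarith
  rw [l2opNorm_conjTranspose_mul_self] at hcluster
  rw [expectation_normalize_sub hCinvT (norm_pos_iff.mp hr0), norm_mul, norm_inv, norm_pow,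
    Complex.norm_real, norm_norm]
  calc (r ^ 2)⁻¹ * ‖_‖ ≤ (r ^ 2)⁻¹ * (ε * l2opNorm C⁻¹ ^ 2) := by gcongr
    _ ≤ l2opNorm C ^ 2 * (ε * l2opNorm C⁻¹ ^ 2) := by
        gcongr
        rw [inv_le_iff_one_le_mul₀ (by positivity), ← mul_pow]
        exact one_le_pow₀ hr
    _ = ε * (l2opNorm C * l2opNorm C⁻¹) ^ 2 := by ring

end Matrix

theorem iterated_disentangling_bound_general (n N : ℕ)
    (T : Matrix (Fin n) (Fin n) ℂ)
    (ω : Fin (N + 1) → EuclideanSpace ℂ (Fin n)) (hω : ∀ i, ‖ω i‖ = 1)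
    (C : Fin N → Matrix (Fin n) (Fin n) ℂ) (hC : ∀ i, IsUnit (C i))
    (hcommH : ∀ i, (C i)ᴴ * T = T * (C i)ᴴ)
    (hstep : ∀ i : Fin N, ω i.castSucc =
      ‖toEuclideanLin (C i)⁻¹ (ω i.succ)‖⁻¹ • toEuclideanLin (C i)⁻¹ (ω i.succ))
    (δ : ℝ) (hδ : 0 ≤ δ)
    (hcluster : ∀ i : Fin N,
      ‖(⟪ω i.succ, toEuclideanLin (T * (((C i)⁻¹)ᴴ * (C i)⁻¹)) (ω i.succ)⟫ -
            ⟪ω i.succ, toEuclideanLin T (ω i.succ)⟫ *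
            ⟪ω i.succ, toEuclideanLin (((C i)⁻¹)ᴴ * (C i)⁻¹) (ω i.succ)⟫)‖ ≤
        δ * l2opNorm T * l2opNorm (((C i)⁻¹)ᴴ * (C i)⁻¹))
    (κ : ℝ) (hκ : κ = ⨆ i : Fin N, l2opNorm (C i) * l2opNorm (C i)⁻¹) :
    ‖(⟪ω 0, toEuclideanLin T (ω 0)⟫ -
        ⟪ω (Fin.last N), toEuclideanLin T (ω (Fin.last N))⟫)‖ ≤
      N * δ * l2opNorm T * κ ^ 2 := by
  have hκC : ∀ i, l2opNorm (C i) * l2opNorm (C i)⁻¹ ≤ κ :=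
    hκ ▸ le_ciSup (Set.finite_range _).bddAbove
  have hδT : 0 ≤ δ * l2opNorm T := mul_nonneg hδ (l2opNorm_nonneg T)
  have hlink : ∀ i : Fin N, dist (expectation T (ω i.castSucc)) (expectation T (ω i.succ)) ≤
      δ * l2opNorm T * κ ^ 2 := by
    intro i
    rw [dist_eq_norm, hstep i]
    calc _ ≤ δ * l2opNorm T * (l2opNorm (C i) * l2opNorm (C i)⁻¹) ^ 2 :=
          norm_expectation_normalize_nonsing_inv_sub_le (hC i) (hcommH i) (hω _) hδT (hcluster i)
      _ ≤ δ * l2opNorm T * κ ^ 2 := by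
          gcongr
          · exact mul_nonneg (l2opNorm_nonneg _) (l2opNorm_nonneg _)
          · exact hκC i
  have htotal := Fin.dist_zero_last_le_mul (fun j => expectation T (ω j)) hlink
  rw [dist_eq_norm] at htotal
  exact htotal.trans_eq (by ring)

theorem iterated_disentangling_bound (n N : ℕ)
    (T : Matrix (Fin n) (Fin n) ℂ)
    (ω : Fin (N + 1) → EuclideanSpace ℂ (Fin n)) (hω : ∀ i, ‖ω i‖ = 1)
    (C : Fin N → Matrix (Fin n) (Fin n) ℂ) (hC : ∀ i, IsUnit (C i))
    (hcomm : ∀ i, C i * T = T * C i)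
    (hcommH : ∀ i, (C i)ᴴ * T = T * (C i)ᴴ)
    (hstep : ∀ i : Fin N, ω i.castSucc =
      ‖toEuclideanLin (C i)⁻¹ (ω i.succ)‖⁻¹ • toEuclideanLin (C i)⁻¹ (ω i.succ))
    (δ : ℝ) (hδ : 0 ≤ δ)
    (hcluster : ∀ i : Fin N,
      ‖(⟪ω i.succ, toEuclideanLin (T * (((C i)⁻¹)ᴴ * (C i)⁻¹)) (ω i.succ)⟫ -
            ⟪ω i.succ, toEuclideanLin T (ω i.succ)⟫ *
            ⟪ω i.succ, toEuclideanLin (((C i)⁻¹)ᴴ * (C i)⁻¹) (ω i.succ)⟫)‖ ≤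
        δ * l2opNorm T * l2opNorm (((C i)⁻¹)ᴴ * (C i)⁻¹))
    (κ : ℝ) (hκ : κ = ⨆ i : Fin N, l2opNorm (C i) * l2opNorm (C i)⁻¹) :
    ‖(⟪ω 0, toEuclideanLin T (ω 0)⟫ -
        ⟪ω (Fin.last N), toEuclideanLin T (ω (Fin.last N))⟫)‖ ≤
      N * δ * l2opNorm T * κ ^ 2 :=
  iterated_disentangling_bound_general n N T ω hω C hC hcommH hstep δ hδ hcluster κ hκ
end

section
/- Let M be an n×n complex matrix admitting a biorthonormal eigensystem: vectors r_0, …, r_{n−1} and l_0, …, l_{n−1} in ℂⁿ and complex numbers λ_0, …, λ_{n−1} with M = Σ_j λ_j · r_j l_jᴴ and ⟨l_i, r_j⟩ = δ_{ij}, where λ_0 = 1 and |λ_j| ≤ q for all j ≠ 0, for some q ≥ 0. Then for all n×n complex matrices A, B and every natural number x ≥ 1, |⟨l_0, A M^x B r_0⟩ − ⟨l_0, A r_0⟩ · ⟨l_0, B r_0⟩| ≤ q^x · Σ_{j ≠ 0} |⟨l_0, A r_j⟩| · |⟨l_j, B r_0⟩|. -/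
open Matrix
open scoped ComplexInnerProductSpace

/-! By biorthonormality the rank-one matrices `r j lⱼᴴ` are orthogonal idempotents, so
`M ^ x = ∑ j, λⱼ ^ x • r j lⱼᴴ` and `⟪l 0, A Mˣ B r 0⟫ = ∑ j, λⱼ ^ x ⟪l 0, A r j⟫ ⟪l j, B r 0⟫`.
The `j = 0` term is the disconnected part, and each remaining term carries `|λⱼ| ^ x ≤ q ^ x`. -/

theorem OrthogonalIdempotents.sum_smul_pow_succ {R A ι : Type*} [CommSemiring R] [Semiring A]
    [Algebra R A] {e : ι → A} (he : OrthogonalIdempotents e) (s : Finset ι) (c : ι → R)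
    (k : ℕ) : (∑ i ∈ s, c i • e i) ^ (k + 1) = ∑ i ∈ s, c i ^ (k + 1) • e i := by
  classical
  induction k with
  | zero => simp
  | succ k ih =>
    rw [pow_succ, ih, Finset.sum_mul_sum]
    refine Finset.sum_congr rfl fun i hi ↦ ?_
    simp only [smul_mul_smul_comm, he.mul_eq, smul_ite, smul_zero, Finset.sum_ite_eq, if_pos hi,
      ← pow_succ]

section EuclideanSpace

variable {𝕜 n : Type*} [RCLike 𝕜] [Fintype n] [DecidableEq n]

theorem Matrix.toEuclideanLin_vecMulVec_star (a b v : EuclideanSpace 𝕜 n) :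
    toEuclideanLin (vecMulVec a (star b)) v = inner 𝕜 b v • a := by
  ext i
  simp [toLpLin_apply, vecMulVec_mulVec, EuclideanSpace.inner_eq_star_dotProduct, dotProduct_comm]

theorem orthogonalIdempotents_vecMulVec_star {ι : Type*} [DecidableEq ι]
    {r l : ι → EuclideanSpace 𝕜 n} (h : ∀ i j, inner 𝕜 (l i) (r j) = if i = j then 1 else 0) :
    OrthogonalIdempotents fun j ↦ vecMulVec (r j) (star (l j)) := by
  rw [OrthogonalIdempotents.iff_mul_eq]
  intro i j
  rw [vecMulVec_mul_vecMulVec, dotProduct_comm, ← EuclideanSpace.inner_eq_star_dotProduct, h]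
  split_ifs with hij
  · simp [hij]
  · simp

theorem inner_toEuclideanLin_mul_sum_smul_vecMulVec_mul {ι : Type*} [Fintype ι]
    (A B : Matrix n n 𝕜) (c : ι → 𝕜) (r l : ι → EuclideanSpace 𝕜 n) (u v : EuclideanSpace 𝕜 n) :
    inner 𝕜 u (toEuclideanLin (A * (∑ j, c j • vecMulVec (r j) (star (l j))) * B) v) =
      ∑ j, c j * (inner 𝕜 u (toEuclideanLin A (r j)) * inner 𝕜 (l j) (toEuclideanLin B v)) := by
  simp only [Matrix.mul_sum, Matrix.sum_mul, mul_smul_comm, smul_mul_assoc, map_sum, map_smul,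
    toLpLin_mul_same, LinearMap.coe_sum, LinearMap.coe_smul, LinearMap.coe_comp, Finset.sum_apply,
    Pi.smul_apply, Function.comp_apply, toEuclideanLin_vecMulVec_star, inner_sum, inner_smul_right]
  exact Finset.sum_congr rfl fun j _ ↦ by ring

end EuclideanSpace

theorem clustering_of_transfer_operator_gap_general (n : ℕ)
    (M : Matrix (Fin (n + 1)) (Fin (n + 1)) ℂ)
    (r l : Fin (n + 1) → EuclideanSpace ℂ (Fin (n + 1)))
    (lam : Fin (n + 1) → ℂ)
    (hM : M = ∑ j, lam j • Matrix.vecMulVec (r j) (star (l j)))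
    (hbiortho : ∀ i j, ⟪l i, r j⟫ = if i = j then 1 else 0)
    (hlam0 : lam 0 = 1)
    (q : ℝ) (hgap : ∀ j : Fin (n + 1), j ≠ 0 → ‖lam j‖ ≤ q) :
    ∀ (A B : Matrix (Fin (n + 1)) (Fin (n + 1)) ℂ) (x : ℕ), 1 ≤ x →
      ‖⟪l 0, toEuclideanLin (A * M ^ x * B) (r 0)⟫ -
          ⟪l 0, toEuclideanLin A (r 0)⟫ * ⟪l 0, toEuclideanLin B (r 0)⟫‖ ≤
        q ^ x * ∑ j ∈ Finset.univ.erase 0,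
          ‖⟪l 0, toEuclideanLin A (r j)⟫‖ *
          ‖⟪l j, toEuclideanLin B (r 0)⟫‖ := by
  intro A B x hx
  obtain ⟨k, rfl⟩ := Nat.exists_eq_add_of_le' hx
  have hMpow : M ^ (k + 1) = ∑ j, lam j ^ (k + 1) • vecMulVec (r j) (star (l j)) :=
    hM ▸ (orthogonalIdempotents_vecMulVec_star hbiortho).sum_smul_pow_succ _ _ _
  rw [hMpow, inner_toEuclideanLin_mul_sum_smul_vecMulVec_mul,
    ← Finset.add_sum_erase _ _ (Finset.mem_univ 0), hlam0, one_pow, one_mul, add_sub_cancel_left,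
    Finset.mul_sum]
  refine (norm_sum_le _ _).trans (Finset.sum_le_sum fun j hj ↦ ?_)
  rw [norm_mul, norm_mul, norm_pow]
  gcongr
  exact hgap j (Finset.ne_of_mem_erase hj)

theorem clustering_of_transfer_operator_gap (n : ℕ)
    (M : Matrix (Fin (n + 1)) (Fin (n + 1)) ℂ)
    (r l : Fin (n + 1) → EuclideanSpace ℂ (Fin (n + 1)))
    (lam : Fin (n + 1) → ℂ)
    (hM : M = ∑ j, lam j • Matrix.vecMulVec (r j) (star (l j)))
    (hbiortho : ∀ i j, ⟪l i, r j⟫ = if i = j then 1 else 0)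
    (hlam0 : lam 0 = 1)
    (q : ℝ) (hq : 0 ≤ q) (hgap : ∀ j : Fin (n + 1), j ≠ 0 → ‖lam j‖ ≤ q) :
    ∀ (A B : Matrix (Fin (n + 1)) (Fin (n + 1)) ℂ) (x : ℕ), 1 ≤ x →
      ‖⟪l 0, toEuclideanLin (A * M ^ x * B) (r 0)⟫ -
          ⟪l 0, toEuclideanLin A (r 0)⟫ * ⟪l 0, toEuclideanLin B (r 0)⟫‖ ≤
        q ^ x * ∑ j ∈ Finset.univ.erase 0,
          ‖⟪l 0, toEuclideanLin A (r j)⟫‖ *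
          ‖⟪l j, toEuclideanLin B (r 0)⟫‖ :=
  clustering_of_transfer_operator_gap_general n M r l lam hM hbiortho hlam0 q hgap
end
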